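/- The Δ-corrected two-grid iteration with Φ_c ≡ 0 converges locally quadratically to the exact coarse solution: assume each ψ_j : ℝ^d → ℝ^d is twice continuously differentiable, and let ū ∈ (ℝ^d)^{N_c+1} be the exact coarse solution, i.e. ū_0 = f_0 and ū_j = ψ_j(ū_{j−1}) + f_{jm} for 1 ≤ j ≤ N_c. Then there exist δ > 0 and C > 0 such that whenever the initial iterate w^0 satisfies ‖w^0 − ū‖ < δ, the iterates defined by w^{k+1}_0 = f_0 and w^{k+1}_j = ψ_j(w^k_{j−1}) + Dψ_j(w^k_{j−1})(w^{k+1}_{j−1} − w^k_{j−1}) + f_{jm} satisfy ‖w^{k+1} − ū‖ ≤ C‖w^k − ū‖² for all k ≥ 0 (in particular the iteration converges to ū for δ small enough). -/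

import Mathlib

/-- `sweep Φ f base k w` is `w^{(k)}`, where `w^{(0)} = w` and
`w^{(k)} = Φ(w^{(k-1)}) + f (base + k)` for `k ≥ 1`. -/
def sweep {d : ℕ} (Φ : (Fin d → ℝ) → Fin d → ℝ) (f : ℕ → Fin d → ℝ) (base : ℕ) :
    ℕ → (Fin d → ℝ) → (Fin d → ℝ)
  | 0, w => w
  | (k + 1), w => Φ (sweep Φ f base k w) + f (base + (k + 1))

/-- The ideal coarse propagator across the `j`-th coarse interval:
`ψ_j(w) = Φ(w^{(m-1)})` with `w^{(0)} = w`, `w^{(k)} = Φ(w^{(k-1)}) + f_{(j-1)m+k}`. -/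
def psi {d : ℕ} (Φ : (Fin d → ℝ) → Fin d → ℝ) (f : ℕ → Fin d → ℝ) (m j : ℕ)
    (w : Fin d → ℝ) : Fin d → ℝ :=
  Φ (sweep Φ f ((j - 1) * m) (m - 1) w)

/-! Each sweep linearizes the exact coarse recursion around the previous iterate. Along a sweep,
the error at level `j + 1` is the first-order Taylor remainder of `ψ_{j+1}`, which is at most
`K ε²` with `ε = ‖w^k - ū‖`, plus `Dψ_{j+1}` applied to the error at level `j`; here `K` bounds
`Dψ_j` and the remainders uniformly on the unit balls around the `ū_{j-1}`, by compactness and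
`C²`-smoothness. Starting from zero error at level `0`, the error at level `j` is at most
`((K + 1)^j - 1) ε²`, so `C = (K + 1)^{N_c}` works. Once `C δ ≤ 1/2` the errors halve at every
step, so the iterates never leave the ball where these estimates hold. -/

open Metric Filter

section NormedSpace

variable {E F : Type*} [NormedAddCommGroup E] [NormedSpace ℝ E]
  [NormedAddCommGroup F] [NormedSpace ℝ F]

theorem Convex.norm_image_sub_sub_fderiv_le {s : Set E} {g : E → F} {x y : E} {M : ℝ}
    (hs : Convex ℝ s) (hg : ∀ z ∈ s, DifferentiableAt ℝ g z) (hM : 0 ≤ M)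
    (hlip : ∀ z ∈ s, ‖fderiv ℝ g z - fderiv ℝ g x‖ ≤ M * ‖z - x‖) (hx : x ∈ s) (hy : y ∈ s) :
    ‖g y - g x - fderiv ℝ g x (y - x)‖ ≤ M * ‖y - x‖ ^ 2 := by
  have hseg : segment ℝ x y ⊆ s := hs.segment_subset hx hy
  have hbound : ∀ z ∈ segment ℝ x y, ‖fderiv ℝ g z - fderiv ℝ g x‖ ≤ M * ‖y - x‖ := fun z hz =>
    (hlip z (hseg hz)).trans (mul_le_mul_of_nonneg_left (norm_sub_le_of_mem_segment hz) hM)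
  calc ‖g y - g x - fderiv ℝ g x (y - x)‖ ≤ M * ‖y - x‖ * ‖y - x‖ :=
        (convex_segment x y).norm_image_sub_le_of_norm_fderiv_le' (fun z hz => hg z (hseg hz))
          hbound (left_mem_segment ℝ x y) (right_mem_segment ℝ x y)
    _ = M * ‖y - x‖ ^ 2 := by ring

-- Stated for all large `K` so that the bounds for finitely many maps combine by `eventually_all`.
theorem ContDiff.eventually_norm_fderiv_le_and_norm_linearization_le [ProperSpace E] {g : E → F}
    (hg : ContDiff ℝ 2 g) (p : E) (r : ℝ) :
    ∀ᶠ K in atTop, ∀ x ∈ closedBall p r,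
      ‖fderiv ℝ g x‖ ≤ K ∧ ‖g p - g x - fderiv ℝ g x (p - x)‖ ≤ K * ‖p - x‖ ^ 2 := by
  have hdg : ContDiff ℝ 1 (fderiv ℝ g) := hg.fderiv_right (by norm_num)
  obtain ⟨L, hL⟩ := (isCompact_closedBall p r).exists_bound_of_continuousOn
    hdg.continuous.continuousOn
  obtain ⟨M, hM⟩ := (isCompact_closedBall p r).exists_bound_of_continuousOn
    (hdg.continuous_fderiv one_ne_zero).continuousOn
  filter_upwards [eventually_ge_atTop (max L M), eventually_ge_atTop 0] with K hK hK0 x hx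
  refine ⟨(hL x hx).trans (le_of_max_le_left hK), ?_⟩
  have hlip : ∀ z ∈ closedBall p r, ‖fderiv ℝ g z - fderiv ℝ g x‖ ≤ K * ‖z - x‖ := fun z hz =>
    (convex_closedBall p r).norm_image_sub_le_of_norm_fderiv_le
      (fun a _ => (hdg.differentiable one_ne_zero).differentiableAt)
      (fun a ha => (hM a ha).trans (le_of_max_le_right hK)) hx hz
  exact (convex_closedBall p r).norm_image_sub_sub_fderiv_le
    (fun z _ => (hg.differentiable (by norm_num)).differentiableAt) hK0 hlip hx
    (mem_closedBall_self (dist_nonneg.trans hx))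

theorem norm_linearization_sub_le {ψ : E → F} {x u v : E} {K : ℝ}
    (hD : ‖fderiv ℝ ψ x‖ ≤ K) (hT : ‖ψ u - ψ x - fderiv ℝ ψ x (u - x)‖ ≤ K * ‖u - x‖ ^ 2) :
    ‖ψ x + fderiv ℝ ψ x (v - x) - ψ u‖ ≤ K * (‖u - x‖ ^ 2 + ‖v - u‖) := by
  have hsplit : ψ x + fderiv ℝ ψ x (v - x) - ψ u =
      -(ψ u - ψ x - fderiv ℝ ψ x (u - x)) + fderiv ℝ ψ x (v - u) := by
    simp only [map_sub]; abel
  have hlin : ‖fderiv ℝ ψ x (v - u)‖ ≤ K * ‖v - u‖ :=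
    (fderiv ℝ ψ x).le_of_opNorm_le hD _
  calc ‖ψ x + fderiv ℝ ψ x (v - x) - ψ u‖
      ≤ ‖ψ u - ψ x - fderiv ℝ ψ x (u - x)‖ + ‖fderiv ℝ ψ x (v - u)‖ := by
        rw [hsplit]; exact (norm_add_le _ _).trans_eq (by rw [norm_neg])
    _ ≤ K * (‖u - x‖ ^ 2 + ‖v - u‖) := by linarith

theorem norm_linearized_sweep_sub_le {N : ℕ} {ψ : Fin N → E → E} {c : Fin N → E}
    {u v w : Fin (N + 1) → E} {K r : ℝ} (hK : 0 ≤ K)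
    (hbound : ∀ i, ∀ x ∈ closedBall (u i.castSucc) r, ‖fderiv ℝ (ψ i) x‖ ≤ K ∧
      ‖ψ i (u i.castSucc) - ψ i x - fderiv ℝ (ψ i) x (u i.castSucc - x)‖ ≤
        K * ‖u i.castSucc - x‖ ^ 2)
    (hu : ∀ i, u i.succ = ψ i (u i.castSucc) + c i)
    (hw0 : w 0 = u 0)
    (hw : ∀ i, w i.succ = ψ i (v i.castSucc)
      + fderiv ℝ (ψ i) (v i.castSucc) (w i.castSucc - v i.castSucc) + c i)
    (hv : ‖v - u‖ ≤ r) :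
    ‖w - u‖ ≤ (K + 1) ^ N * ‖v - u‖ ^ 2 := by
  set ε := ‖v - u‖
  have hcomp : ∀ i : Fin (N + 1), ‖w i - u i‖ ≤ ((K + 1) ^ (i : ℕ) - 1) * ε ^ 2 := by
    intro i
    induction i using Fin.induction with
    | zero => simp [hw0]
    | succ i ih =>
      have hvu : ‖u i.castSucc - v i.castSucc‖ ≤ ε := by
        rw [norm_sub_rev]; exact norm_le_pi_norm (v - u) _
      obtain ⟨hD, hT⟩ := hbound i (v i.castSucc) <| by
        rw [mem_closedBall, dist_eq_norm_sub']; exact hvu.trans hv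
      have hstep := norm_linearization_sub_le (v := w i.castSucc) hD hT
      rw [hw, hu, add_sub_add_right_eq_sub]
      have hpow : K * (K + 1) ^ (i : ℕ) ≤ (K + 1) ^ ((i : ℕ) + 1) - 1 := by
        have := one_le_pow₀ (n := (i : ℕ)) (by linarith : (1 : ℝ) ≤ K + 1)
        rw [pow_succ]; nlinarith
      calc _ ≤ K * (‖u i.castSucc - v i.castSucc‖ ^ 2 + ‖w i.castSucc - u i.castSucc‖) := hstep
        _ ≤ K * (ε ^ 2 + ((K + 1) ^ (i : ℕ) - 1) * ε ^ 2) := by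
          gcongr; simpa only [Fin.val_castSucc] using ih
        _ = K * (K + 1) ^ (i : ℕ) * ε ^ 2 := by ring
        _ ≤ ((K + 1) ^ ((i.succ : Fin (N + 1)) : ℕ) - 1) * ε ^ 2 := by
          rw [Fin.val_succ]; gcongr
  refine (pi_norm_le_iff_of_nonneg (by positivity)).2 fun i => (hcomp i).trans ?_
  gcongr
  calc (K + 1) ^ (i : ℕ) - 1 ≤ (K + 1) ^ (i : ℕ) := by linarith
    _ ≤ (K + 1) ^ N := pow_le_pow_right₀ (by linarith) (Nat.lt_succ_iff.1 i.isLt)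

end NormedSpace

theorem le_half_pow_mul_of_le_mul_sq {e : ℕ → ℝ} {C δ : ℝ} (hC : 0 ≤ C) (hCδ : C * δ ≤ 1 / 2)
    (he : ∀ k, 0 ≤ e k) (h0 : e 0 ≤ δ) (hstep : ∀ k, e k ≤ δ → e (k + 1) ≤ C * e k ^ 2) (k : ℕ) :
    e k ≤ (1 / 2) ^ k * δ := by
  induction k with
  | zero => simpa using h0
  | succ k ih =>
    have hδ : e k ≤ δ :=
      ih.trans (mul_le_of_le_one_left ((he 0).trans h0) (pow_le_one₀ (by norm_num) (by norm_num)))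
    have hCe : C * e k ≤ 1 / 2 := (mul_le_mul_of_nonneg_left hδ hC).trans hCδ
    calc e (k + 1) ≤ (C * e k) * e k := (hstep k hδ).trans_eq (by ring)
      _ ≤ 1 / 2 * e k := mul_le_mul_of_nonneg_right hCe (he k)
      _ ≤ (1 / 2) ^ (k + 1) * δ := by rw [pow_succ']; linarith

/-- The Δ-corrected two-grid iteration with `Φ_c ≡ 0` converges locally quadratically to the
exact coarse solution `ū`: there are `δ > 0` and `C > 0` such that if `‖w⁰ - ū‖ < δ`, then
the iterates `w^{k+1}_0 = f_0`,
`w^{k+1}_j = ψ_j(w^k_{j-1}) + Dψ_j(w^k_{j-1})(w^{k+1}_{j-1} - w^k_{j-1}) + f_{jm}`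
satisfy `‖w^{k+1} - ū‖ ≤ C ‖w^k - ū‖²` for all `k`, and converge to `ū`. -/
theorem stmt7 {d m Nc : ℕ}
    (Φ : (Fin d → ℝ) → Fin d → ℝ) (f : ℕ → Fin d → ℝ)
    (hsmooth : ∀ j, 1 ≤ j → j ≤ Nc → ContDiff ℝ 2 (psi Φ f m j))
    (ubar : Fin (Nc + 1) → Fin d → ℝ)
    (hubar0 : ubar ⟨0, Nat.succ_pos Nc⟩ = f 0)
    (hubar : ∀ (j : ℕ) (h1 : 1 ≤ j) (h2 : j ≤ Nc),
      ubar ⟨j, Nat.lt_succ_of_le h2⟩ = psi Φ f m j (ubar ⟨j - 1, by omega⟩) + f (j * m)) :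
    ∃ δ > 0, ∃ C > 0, ∀ w : ℕ → Fin (Nc + 1) → Fin d → ℝ,
      ‖w 0 - ubar‖ < δ →
      (∀ k, w (k + 1) ⟨0, Nat.succ_pos Nc⟩ = f 0) →
      (∀ (k : ℕ) (j : ℕ) (h1 : 1 ≤ j) (h2 : j ≤ Nc),
        w (k + 1) ⟨j, Nat.lt_succ_of_le h2⟩ =
          psi Φ f m j (w k ⟨j - 1, by omega⟩)
            + fderiv ℝ (psi Φ f m j) (w k ⟨j - 1, by omega⟩)
                (w (k + 1) ⟨j - 1, by omega⟩ - w k ⟨j - 1, by omega⟩)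
            + f (j * m)) →
      (∀ k, ‖w (k + 1) - ubar‖ ≤ C * ‖w k - ubar‖ ^ 2) ∧
        Filter.Tendsto w Filter.atTop (nhds ubar) := by
  obtain ⟨K, hK0, hbound⟩ := ((eventually_ge_atTop 0).and (eventually_all.2 fun i : Fin Nc =>
    (hsmooth (i + 1) (by omega) i.isLt).eventually_norm_fderiv_le_and_norm_linearization_le
      (ubar i.castSucc) 1)).exists
  set C := (K + 1) ^ Nc
  have hC : 0 < C := by positivity
  set δ := min 1 (1 / (2 * C))
  have hδ : 0 < δ := lt_min one_pos (by positivity)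
  have hCδ : C * δ ≤ 1 / 2 :=
    (mul_le_mul_of_nonneg_left (min_le_right _ _) hC.le).trans_eq (by field_simp)
  refine ⟨δ, hδ, C, hC, fun w hw0 hwf0 hw => ?_⟩
  -- `i.succ` and `i.castSucc` are definitionally `⟨i + 1, _⟩` and `⟨i + 1 - 1, _⟩`.
  have hstep (k : ℕ) (hk : ‖w k - ubar‖ ≤ δ) : ‖w (k + 1) - ubar‖ ≤ C * ‖w k - ubar‖ ^ 2 :=
    norm_linearized_sweep_sub_le (ψ := fun i => psi Φ f m (i + 1)) (c := fun i => f ((i + 1) * m))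
      hK0 hbound (fun i => hubar (i + 1) (by omega) i.isLt)
      ((hwf0 k).trans hubar0.symm) (fun i => hw k (i + 1) (by omega) i.isLt)
      (hk.trans (min_le_left _ _))
  have hgeo := le_half_pow_mul_of_le_mul_sq (e := fun k => ‖w k - ubar‖) hC.le hCδ
    (fun k => norm_nonneg _) hw0.le hstep
  have hsmall (k : ℕ) : ‖w k - ubar‖ ≤ δ :=
    (hgeo k).trans (mul_le_of_le_one_left hδ.le (pow_le_one₀ (by norm_num) (by norm_num)))
  refine ⟨fun k => hstep k (hsmall k), tendsto_iff_norm_sub_tendsto_zero.2 ?_⟩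
  refine squeeze_zero (fun k => norm_nonneg _) hgeo ?_
  simpa using (tendsto_pow_atTop_nhds_zero_of_lt_one (by norm_num : (0 : ℝ) ≤ 1 / 2)
    (by norm_num)).mul_const δ
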